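/- Let d ≥ 1, let a be a nonzero partition of length d, and let μ = lcm(1,2,…,d). There exists a constant N (depending only on a) such that every nonzero partition b of length d with b ⪯ a in the extended dominance order and with weight |b| > N can be written as b = b' + v(L, μa) for some composition L ∈ 𝓛(d) and some partition b' of length d which is either zero or satisfies b' ⪯ a in the extended dominance order. -/

import Mathlib

open Finset

/-- A partition of length `d`: a weakly decreasing sequence of natural numbers. -/
def IsPartition (d : ℕ) (a : Fin d → ℕ) : Prop :=
  ∀ i j : Fin d, i ≤ j → a j ≤ a i

/-- The weight `|a|` of a sequence: the sum of its entries. -/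
def weight (d : ℕ) (a : Fin d → ℕ) : ℕ := ∑ i, a i

/-- The sum of the first `k` entries of `a`. -/
def psum (d : ℕ) (a : Fin d → ℕ) (k : ℕ) : ℕ :=
  ∑ i : Fin d, if (i : ℕ) < k then a i else 0

/-- The extended dominance order on nonzero partitions of length `d`:
`b ⪯ a` iff `|a|·(b₁+⋯+b_k) ≤ |b|·(a₁+⋯+a_k)` for all `1 ≤ k ≤ d-1`. -/
def ExtDom (d : ℕ) (b a : Fin d → ℕ) : Prop :=
  ∀ k : ℕ, 1 ≤ k → k ≤ d - 1 → weight d a * psum d b k ≤ weight d b * psum d a k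

/-- `L` is a composition of `d`: a list of positive integers summing to `d`. -/
def IsComposition (d : ℕ) (L : List ℕ) : Prop :=
  (∀ x ∈ L, 0 < x) ∧ L.sum = d

/-- Given a composition `L` and an index `i`, return the pair
`(start, length)` of the consecutive block of `L` containing position `i`. -/
def blockOf : List ℕ → ℕ → ℕ × ℕ
  | [], _ => (0, 0)
  | l :: L, i =>
      if i < l then (0, l)
      else
        let p := blockOf L (i - l)
        (p.1 + l, p.2)

/-- The sum of the entries of `a` over the block of `L` containing position `i`. -/
def blockSum (d : ℕ) (L : List ℕ) (a : Fin d → ℕ) (i : Fin d) : ℕ :=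
  ∑ j : Fin d,
    if (blockOf L (i : ℕ)).1 ≤ (j : ℕ) ∧ (j : ℕ) < (blockOf L (i : ℕ)).1 + (blockOf L (i : ℕ)).2
    then a j else 0

/-- `v(L, a)`: each consecutive block of `a` (with lengths given by `L`) is replaced by the
constant block whose entries all equal the average of that block. -/
def vSeq (d : ℕ) (L : List ℕ) (a : Fin d → ℕ) (i : Fin d) : ℕ :=
  blockSum d L a i / (blockOf L (i : ℕ)).2

/-- `μ = lcm(1,2,…,d)`. -/
def mu (d : ℕ) : ℕ := (Finset.Icc 1 d).lcm id

/-!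
Index entries from `0`, write `A`, `B` for the prefix sums of `a`, `b`, and `W = |a|`, `V = |b|`,
so that `b ⪯ a` reads `W·B ≤ V·A`. For a composition `L`, the prefix sums `C` of `c = v(L, μa)`
interpolate `μA` linearly between consecutive cut points of `L`. Hence `b - c ⪯ a` amounts to a
chord inequality on every block, and `b - c` is a partition once `b` drops by at least
`μ a₀ ≥ max c` at every interior cut.

If the chord inequality fails on a block `[p, q)`, comparing it with `W·B ≤ V·A` at `p` and `q`
bounds `V - μW` by `W` times the concavity defect of `B` on the block, which is at most
`d²·(b_p - b_{q-1})`. For `V` large this forces a drop `b_{j-1} - b_j > μ a₀` at some interior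
point `j`, where the block can be split; splitting recursively ends with a composition all of whose
blocks are good.
-/

def prefixSum (f : ℕ → ℤ) (k : ℕ) : ℤ := ∑ i ∈ range k, f i

def chordDefect (F : ℕ → ℤ) (p k q : ℕ) : ℤ :=
  ((q : ℤ) - k) * (F k - F p) - ((k : ℤ) - p) * (F q - F k)

section PrefixSum

variable {f : ℕ → ℤ} {p k q : ℕ}

@[simp] lemma prefixSum_zero (f : ℕ → ℤ) : prefixSum f 0 = 0 := rfl

lemma prefixSum_succ (f : ℕ → ℤ) (k : ℕ) : prefixSum f (k + 1) = prefixSum f k + f k :=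
  sum_range_succ f k

lemma prefixSum_sub_le (hf : Antitone f) (h : p ≤ k) :
    prefixSum f k - prefixSum f p ≤ ((k : ℤ) - p) * f p := by
  have := sum_le_card_nsmul (Ico p k) f (f p) fun i hi => hf (mem_Ico.1 hi).1
  rw [prefixSum, prefixSum, ← sum_Ico_eq_sub f h]
  simpa [Nat.cast_sub h] using this

lemma le_prefixSum_sub (hf : Antitone f) (h : p ≤ k) :
    ((k : ℤ) - p) * f (k - 1) ≤ prefixSum f k - prefixSum f p := by
  have := card_nsmul_le_sum (Ico p k) f (f (k - 1)) fun i hi =>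
    hf (Nat.le_sub_one_of_lt (mem_Ico.1 hi).2)
  rw [prefixSum, prefixSum, ← sum_Ico_eq_sub f h]
  simpa [Nat.cast_sub h] using this

lemma chordDefect_prefixSum_le (hf : Antitone f) (hpk : p ≤ k) (hkq : k ≤ q) :
    chordDefect (prefixSum f) p k q ≤ ((k : ℤ) - p) * ((q : ℤ) - k) * (f p - f (q - 1)) := by
  have hk : (0 : ℤ) ≤ (k : ℤ) - p := by simp [hpk]
  have hq : (0 : ℤ) ≤ (q : ℤ) - k := by simp [hkq]
  have h₁ := mul_le_mul_of_nonneg_left (prefixSum_sub_le hf hpk) hq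
  have h₂ := mul_le_mul_of_nonneg_left (le_prefixSum_sub hf hkq) hk
  unfold chordDefect
  linarith

end PrefixSum

lemma exists_lt_sub_succ_of_mul_lt {f : ℕ → ℤ} {M : ℤ} {m n : ℕ} (hmn : m ≤ n)
    (h : ((n : ℤ) - m) * M < f m - f n) : ∃ j, m ≤ j ∧ j < n ∧ M < f j - f (j + 1) := by
  induction n, hmn using Nat.le_induction with
  | base => simp at h
  | succ n hmn ih =>
    by_cases hn : M < f n - f (n + 1)
    · exact ⟨n, hmn, n.lt_succ_self, hn⟩
    · obtain ⟨j, hmj, hjn, hj⟩ := ih (by push_cast at h; linarith)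
      exact ⟨j, hmj, hjn.trans n.lt_succ_self, hj⟩

lemma exists_drop_of_chord_violation {a b : ℕ → ℤ} {W V μ : ℤ} {d p k q : ℕ}
    (hb : Antitone b) (hW : 0 < W) (hμ : 0 < μ) (ha₀ : 0 ≤ a 0)
    (hdom : ∀ k ≤ d, W * prefixSum b k ≤ V * prefixSum a k)
    (hV : W * (d ^ 3 * (μ * a 0)) ≤ V - μ * W)
    (hpk : p < k) (hkq : k < q) (hqd : q ≤ d)
    (hviol : ((q : ℤ) - p) * (V * prefixSum a k - W * prefixSum b k) <
      W * μ * chordDefect (prefixSum a) p k q) :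
    ∃ j, p < j ∧ j < q ∧ μ * a 0 < b (j - 1) - b j := by
  set A := prefixSum a
  set B := prefixSum b
  have hu : (0 : ℤ) < (k : ℤ) - p := by simp [hpk]
  have hw : (0 : ℤ) < (q : ℤ) - k := by simp [hkq]
  have hud : (k : ℤ) - p ≤ d := by omega
  have hwd : (q : ℤ) - k ≤ d := by omega
  -- `chordDefect` is linear in the function and `V • A - W • B ≥ 0` at `p` and `q`
  have hgap : (V - μ * W) * chordDefect A p k q < W * chordDefect B p k q := by
    have hp := mul_le_mul_of_nonneg_left (hdom p (by omega)) hw.le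
    have hq := mul_le_mul_of_nonneg_left (hdom q hqd) hu.le
    unfold chordDefect at hviol ⊢
    linarith
  have hδ : 0 < chordDefect A p k q := by
    have hk : 0 ≤ ((q : ℤ) - p) * (V * A k - W * B k) :=
      mul_nonneg (by omega) (by linarith [hdom k (by omega)])
    exact pos_of_mul_pos_right (hk.trans_lt hviol) (by positivity)
  have hD : (d : ℤ) * (μ * a 0) < b p - b (q - 1) := by
    have hD₀ : 0 ≤ b p - b (q - 1) := sub_nonneg.2 (hb (by omega))
    have hVμ : 0 ≤ V - μ * W := le_trans (by positivity) hV
    have hconc : chordDefect B p k q ≤ (d : ℤ) ^ 2 * (b p - b (q - 1)) :=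
      (chordDefect_prefixSum_le hb hpk.le hkq.le).trans
        (mul_le_mul_of_nonneg_right (by nlinarith) hD₀)
    have : W * ((d : ℤ) ^ 2 * ((d : ℤ) * (μ * a 0))) < W * ((d : ℤ) ^ 2 * (b p - b (q - 1))) :=
      calc _ = W * (d ^ 3 * (μ * a 0)) := by ring
        _ ≤ (V - μ * W) * 1 := by linarith
        _ ≤ (V - μ * W) * chordDefect A p k q := mul_le_mul_of_nonneg_left hδ hVμ
        _ < W * chordDefect B p k q := hgap
        _ ≤ _ := mul_le_mul_of_nonneg_left hconc hW.le
    exact lt_of_mul_lt_mul_left (lt_of_mul_lt_mul_left this hW.le) (by positivity)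
  obtain ⟨j, hpj, hjq, hj⟩ := exists_lt_sub_succ_of_mul_lt (f := b) (M := μ * a 0)
    (m := p) (n := q - 1) (by omega)
    (lt_of_le_of_lt (mul_le_mul_of_nonneg_right (by omega) (by positivity)) hD)
  exact ⟨j + 1, by omega, by omega, by simpa using hj⟩

def IsBlockChain (R : ℕ → ℕ → Prop) : ℕ → List ℕ → Prop
  | _, [] => True
  | p, l :: L => 0 < l ∧ R p (p + l) ∧ IsBlockChain R (p + l) L

namespace IsBlockChain

variable {R : ℕ → ℕ → Prop}

lemma append : ∀ {p : ℕ} {L₁ L₂ : List ℕ}, IsBlockChain R p L₁ →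
    IsBlockChain R (p + L₁.sum) L₂ → IsBlockChain R p (L₁ ++ L₂)
  | _, [], _, _, h₂ => by simpa using h₂
  | p, l :: L₁, _, ⟨hl, hR, h₁⟩, h₂ =>
    ⟨hl, hR, append h₁ (by simpa [add_assoc] using h₂)⟩

lemma pos : ∀ {p : ℕ} {L : List ℕ}, IsBlockChain R p L → ∀ x ∈ L, 0 < x
  | _, [], _ => by simp
  | _, _ :: _, ⟨hl, _, h⟩ => by
    simpa [hl] using h.pos

lemma rel_blockOf : ∀ {p i : ℕ} {L : List ℕ}, IsBlockChain R p L → i < L.sum →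
    R (p + (blockOf L i).1) (p + (blockOf L i).1 + (blockOf L i).2)
  | _, _, [], _, hi => by simp at hi
  | p, i, l :: L, ⟨_, hR, h⟩, hi => by
    by_cases hil : i < l
    · simpa [blockOf, hil] using hR
    · have := h.rel_blockOf (i := i - l) (by simp at hi; omega)
      simpa [blockOf, hil, add_assoc, add_comm l, add_left_comm l] using this

end IsBlockChain

lemma exists_isBlockChain {P : ℕ → ℕ → Prop} {Q : ℕ → Prop}
    (hsplit : ∀ p q, p < q → Q q → ¬ P p q → ∃ j, p < j ∧ j < q ∧ Q j) {p q : ℕ}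
    (hpq : p < q) (hq : Q q) :
    ∃ L : List ℕ, L.sum = q - p ∧ IsBlockChain (fun s e => P s e ∧ Q e) p L := by
  induction h : q - p using Nat.strong_induction_on generalizing p q with
  | _ n ih =>
    by_cases hP : P p q
    · exact ⟨[q - p], by simp [h], by simpa [IsBlockChain, Nat.add_sub_cancel' hpq.le, hpq]
        using ⟨hP, hq⟩⟩
    · obtain ⟨j, hpj, hjq, hj⟩ := hsplit p q hpq hq hP
      obtain ⟨L₁, hL₁, h₁⟩ := ih (j - p) (by omega) hpj hj rfl
      obtain ⟨L₂, hL₂, h₂⟩ := ih (q - j) (by omega) hjq hq rfl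
      refine ⟨L₁ ++ L₂, by simp; omega, h₁.append ?_⟩
      rwa [hL₁, Nat.add_sub_cancel' hpj.le]

lemma blockOf_bounds : ∀ {L : List ℕ} {i : ℕ}, i < L.sum →
    (blockOf L i).1 ≤ i ∧ i < (blockOf L i).1 + (blockOf L i).2 ∧
      (blockOf L i).1 + (blockOf L i).2 ≤ L.sum
  | [], _, hi => by simp at hi
  | l :: L, i, hi => by
    by_cases hil : i < l
    · simp [blockOf, hil]
    · have := blockOf_bounds (L := L) (i := i - l) (by simp at hi; omega)
      simp only [blockOf, hil, if_false, List.sum_cons]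
      omega

lemma blockOf_eq_of_mem : ∀ {L : List ℕ} {i j : ℕ}, (blockOf L i).1 ≤ j →
    j < (blockOf L i).1 + (blockOf L i).2 → blockOf L j = blockOf L i
  | [], _, _, _, hj => by simp [blockOf] at hj
  | l :: L, i, j, hj₁, hj₂ => by
    by_cases hil : i < l
    · simp_all [blockOf]
    · simp only [blockOf, hil, if_false] at hj₁ hj₂ ⊢
      have hjl : ¬ j < l := by omega
      rw [if_neg hjl, blockOf_eq_of_mem (i := i - l) (j := j - l) (by omega) (by omega)]

lemma blockOf_succ_fst {L : List ℕ} {j : ℕ} (hj : j + 1 < L.sum)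
    (hend : (blockOf L j).1 + (blockOf L j).2 = j + 1) : (blockOf L (j + 1)).1 = j + 1 := by
  obtain ⟨h₁, h₂, -⟩ := blockOf_bounds hj
  by_contra hne
  have := blockOf_eq_of_mem (L := L) (i := j + 1) (j := j) (by omega) (by omega)
  rw [this] at hend
  omega

def zeroExt {d : ℕ} (x : Fin d → ℕ) (i : ℕ) : ℤ := if h : i < d then x ⟨i, h⟩ else 0

section ZeroExt

variable {d : ℕ}

lemma zeroExt_nonneg (x : Fin d → ℕ) (i : ℕ) : 0 ≤ zeroExt x i := by
  unfold zeroExt; split_ifs <;> simp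

lemma zeroExt_of_le (x : Fin d → ℕ) {i : ℕ} (hi : d ≤ i) : zeroExt x i = 0 := by
  simp [zeroExt, not_lt.2 hi]

@[simp] lemma zeroExt_val (x : Fin d → ℕ) (i : Fin d) : zeroExt x i = x i := by
  simp [zeroExt]

lemma isPartition_iff_antitone_zeroExt {x : Fin d → ℕ} :
    IsPartition d x ↔ Antitone (zeroExt x) := by
  refine ⟨fun hx i j hij => ?_, fun hx i j hij => by simpa using hx (Fin.le_def.1 hij)⟩
  by_cases hj : j < d
  · simpa [zeroExt, hj, lt_of_le_of_lt hij hj] using hx ⟨i, by omega⟩ ⟨j, hj⟩ hij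
  · rw [zeroExt_of_le x (not_lt.1 hj)]
    exact zeroExt_nonneg x i

lemma psum_eq_prefixSum (x : Fin d → ℕ) (k : ℕ) : (psum d x k : ℤ) = prefixSum (zeroExt x) k := by
  have h₁ : (psum d x k : ℤ) = ∑ i ∈ (range d).filter (· < k), zeroExt x i := by
    rw [sum_filter, ← Fin.sum_univ_eq_sum_range (fun i => if i < k then zeroExt x i else 0)]
    simp [psum]
  have h₂ : prefixSum (zeroExt x) k = ∑ i ∈ (range k).filter (· < d), zeroExt x i := by
    rw [sum_filter_of_ne fun i _ hi => by_contra fun h => hi (zeroExt_of_le x (not_lt.1 h))]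
    rfl
  rw [h₁, h₂]
  congr 1
  ext i
  simp only [mem_filter, mem_range]
  tauto

lemma weight_eq_prefixSum (x : Fin d → ℕ) : (weight d x : ℤ) = prefixSum (zeroExt x) d := by
  rw [← psum_eq_prefixSum]
  simp [weight, psum]

lemma blockSum_eq (L : List ℕ) (x : Fin d → ℕ) (i : Fin d) :
    (blockSum d L x i : ℤ) = prefixSum (zeroExt x) ((blockOf L i).1 + (blockOf L i).2) -
      prefixSum (zeroExt x) (blockOf L i).1 := by
  rw [← psum_eq_prefixSum, ← psum_eq_prefixSum, eq_sub_iff_add_eq]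
  norm_cast
  unfold blockSum psum
  rw [← sum_add_distrib]
  refine sum_congr rfl fun j _ => ?_
  split_ifs <;> omega

lemma extDom_iff {b a : Fin d → ℕ} : ExtDom d b a ↔
    ∀ k ≤ d, (weight d a : ℤ) * prefixSum (zeroExt b) k ≤ weight d b * prefixSum (zeroExt a) k := by
  simp only [← psum_eq_prefixSum]
  refine ⟨fun h k hk => ?_, fun h k _ hk => by exact_mod_cast h k (by omega)⟩
  rcases Nat.eq_zero_or_pos k with rfl | hk₀
  · simp [psum]
  rcases eq_or_lt_of_le hk with rfl | hkd
  · simp [psum, weight, mul_comm]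
  · exact_mod_cast h k hk₀ (by omega)

end ZeroExt

lemma dvd_mu {l d : ℕ} (hl₀ : 0 < l) (hld : l ≤ d) : l ∣ mu d :=
  Finset.dvd_lcm (s := Icc 1 d) (f := id) (mem_Icc.2 ⟨hl₀, hld⟩)

def IsBlockAverage (L : List ℕ) (d : ℕ) (μ : ℤ) (a c : ℕ → ℤ) : Prop :=
  ∀ j < d, ((blockOf L j).2 : ℤ) * c j =
    μ * (prefixSum a ((blockOf L j).1 + (blockOf L j).2) - prefixSum a (blockOf L j).1)

lemma isBlockAverage_vSeq {d : ℕ} {L : List ℕ} (hL : L.sum = d) (a : Fin d → ℕ) :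
    IsBlockAverage L d (mu d) (zeroExt a) (zeroExt (vSeq d L (mu d • a))) := by
  intro j hj
  obtain ⟨h₁, h₂, h₃⟩ := blockOf_bounds (L := L) (i := j) (by omega)
  have hdvd := dvd_mu (l := (blockOf L j).2) (d := d) (by omega) (by omega)
  have hsmul : blockSum d L (mu d • a) ⟨j, hj⟩ = mu d * blockSum d L a ⟨j, hj⟩ := by
    simp only [blockSum, mul_sum, Pi.smul_apply, smul_eq_mul, mul_ite, mul_zero]
  have hnat : (blockOf L j).2 * vSeq d L (mu d • a) ⟨j, hj⟩ = mu d * blockSum d L a ⟨j, hj⟩ := by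
    rw [vSeq, hsmul, ← Nat.div_mul_right_comm hdvd, ← mul_assoc, Nat.mul_div_cancel' hdvd]
  have := blockSum_eq L a ⟨j, hj⟩
  simp only [zeroExt, hj, dif_pos] at this ⊢
  rw [← this]
  exact_mod_cast hnat

/-- With `C` the prefix sums of the block average of `μ a` on `[p, q)`, this is
`W·(B k - C k) ≤ (V - μW)·A k` for `p < k < q`, multiplied by `q - p`. -/
def ChordBound (A B : ℕ → ℤ) (W V μ : ℤ) (p q : ℕ) : Prop :=
  ∀ k, p < k → k < q → W * μ * chordDefect A p k q ≤ ((q : ℤ) - p) * (V * A k - W * B k)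

namespace IsBlockAverage

variable {L : List ℕ} {d : ℕ} {μ : ℤ} {a c : ℕ → ℤ}

lemma eq_of_blockOf_eq (hc : IsBlockAverage L d μ a c) (hL : L.sum = d) {i j : ℕ}
    (hi : i < d) (hj : j < d) (h : blockOf L i = blockOf L j) : c i = c j := by
  obtain ⟨h₁, h₂, -⟩ := blockOf_bounds (L := L) (i := j) (by omega)
  have hci := hc i hi
  rw [h, ← hc j hj] at hci
  exact mul_left_cancel₀ (by omega) hci

lemma prefixSum_succ_eq (hc : IsBlockAverage L d μ a c) (hL : L.sum = d) :
    ∀ j < d, prefixSum c (j + 1) =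
      μ * prefixSum a (blockOf L j).1 + ((j : ℤ) + 1 - (blockOf L j).1) * c j := by
  intro j
  induction j with
  | zero =>
    intro hd
    have := (blockOf_bounds (L := L) (i := 0) (by omega)).1
    simp [prefixSum_succ, Nat.le_zero.1 this]
  | succ j ih =>
    intro hj
    obtain ⟨h₁, h₂, -⟩ := blockOf_bounds (L := L) (i := j) (by omega)
    rw [prefixSum_succ, ih (by omega)]
    rcases Nat.lt_or_ge (j + 1) ((blockOf L j).1 + (blockOf L j).2) with hin | hend
    · have hb := blockOf_eq_of_mem (L := L) (i := j) (j := j + 1) (by omega) hin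
      rw [hb, hc.eq_of_blockOf_eq hL hj (by omega) hb]
      push_cast
      ring
    · have hend : (blockOf L j).1 + (blockOf L j).2 = j + 1 := by omega
      have hcj := hc j (by omega)
      have hl : ((blockOf L j).2 : ℤ) = j + 1 - (blockOf L j).1 := by omega
      rw [hend, hl] at hcj
      rw [blockOf_succ_fst (by omega) hend]
      push_cast
      linear_combination hcj

lemma prefixSum_eq (hc : IsBlockAverage L d μ a c) (hL : L.sum = d) :
    prefixSum c d = μ * prefixSum a d := by
  rcases Nat.eq_zero_or_pos d with rfl | hd
  · simp
  obtain ⟨h₁, h₂, h₃⟩ := blockOf_bounds (L := L) (i := d - 1) (by omega)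
  have hcd := hc (d - 1) (by omega)
  have hl : ((blockOf L (d - 1)).2 : ℤ) = d - (blockOf L (d - 1)).1 := by omega
  rw [show (blockOf L (d - 1)).1 + (blockOf L (d - 1)).2 = d by omega, hl] at hcd
  rw [← Nat.sub_add_cancel hd, hc.prefixSum_succ_eq hL (d - 1) (by omega), Nat.sub_add_cancel hd]
  push_cast [hd]
  linear_combination hcd

lemma mul_sub_prefixSum_le (hc : IsBlockAverage L d μ a c) (hL : L.sum = d) {b : ℕ → ℤ}
    {W V : ℤ} (hchord : ∀ j < d, ChordBound (prefixSum a) (prefixSum b) W V μ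
      (blockOf L j).1 ((blockOf L j).1 + (blockOf L j).2))
    (hdom : ∀ k ≤ d, W * prefixSum b k ≤ V * prefixSum a k) :
    ∀ k ≤ d, W * (prefixSum b k - prefixSum c k) ≤ (V - μ * W) * prefixSum a k := by
  intro k hk
  rcases k with _ | j
  · simp
  set s := (blockOf L j).1
  set l := (blockOf L j).2
  obtain ⟨h₁, h₂, h₃⟩ := blockOf_bounds (L := L) (i := j) (by omega)
  have hl : (0 : ℤ) < l := by omega
  have hcj := hc j (by omega)
  have hident : (l : ℤ) * (μ * prefixSum a (j + 1) - prefixSum c (j + 1)) =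
      μ * chordDefect (prefixSum a) s (j + 1) (s + l) := by
    rw [hc.prefixSum_succ_eq hL j (by omega), chordDefect]
    push_cast
    linear_combination (-((j : ℤ) + 1 - s)) * hcj
  have hchord' : W * μ * chordDefect (prefixSum a) s (j + 1) (s + l) ≤
      l * (V * prefixSum a (j + 1) - W * prefixSum b (j + 1)) := by
    rcases Nat.lt_or_ge (j + 1) (s + l) with hlt | hge
    · simpa using hchord j (by omega) (j + 1) (by omega) hlt
    · rw [show s + l = j + 1 by omega]
      simpa [chordDefect] using mul_nonneg hl.le (sub_nonneg.2 (hdom (j + 1) hk))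
  refine le_of_mul_le_mul_left ?_ hl
  linear_combination hchord' + W * hident

lemma sub_succ_le (hc : IsBlockAverage L d μ a c) (hL : L.sum = d) {b : ℕ → ℤ}
    (ha : Antitone a) (hb : Antitone b) (hμ : 0 ≤ μ) (hc₀ : ∀ i, 0 ≤ c i)
    (hcut : ∀ j < d, (blockOf L j).1 + (blockOf L j).2 = d ∨
      μ * a 0 ≤ b ((blockOf L j).1 + (blockOf L j).2 - 1) - b ((blockOf L j).1 + (blockOf L j).2))
    {j : ℕ} (hj : j + 1 < d) : b (j + 1) - c (j + 1) ≤ b j - c j := by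
  obtain ⟨h₁, h₂, h₃⟩ := blockOf_bounds (L := L) (i := j) (by omega)
  rcases Nat.lt_or_ge (j + 1) ((blockOf L j).1 + (blockOf L j).2) with hin | hend
  · have hbl := blockOf_eq_of_mem (L := L) (i := j) (j := j + 1) (by omega) hin
    rw [hc.eq_of_blockOf_eq hL hj (by omega) hbl]
    linarith [hb j.le_succ]
  have hend : (blockOf L j).1 + (blockOf L j).2 = j + 1 := by omega
  have hdrop : μ * a 0 ≤ b j - b (j + 1) := by
    simpa [hend] using (hcut j (by omega)).resolve_left (by omega)
  have hcj : c j ≤ μ * a 0 := by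
    have hl : (0 : ℤ) < (blockOf L j).2 := by omega
    have hsum := prefixSum_sub_le ha (p := (blockOf L j).1)
      (k := (blockOf L j).1 + (blockOf L j).2) (by omega)
    have ha₀ := ha (Nat.zero_le (blockOf L j).1)
    refine le_of_mul_le_mul_left ?_ hl
    rw [hc j (by omega)]
    push_cast at hsum
    calc _ ≤ μ * ((blockOf L j).2 * a (blockOf L j).1) :=
          mul_le_mul_of_nonneg_left (by linarith) hμ
      _ ≤ μ * ((blockOf L j).2 * a 0) :=
          mul_le_mul_of_nonneg_left (mul_le_mul_of_nonneg_left ha₀ hl.le) hμ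
      _ = _ := by ring
  linarith [hc₀ (j + 1)]

end IsBlockAverage

lemma nonneg_of_mul_prefixSum_le {e : ℕ → ℤ} {A W V : ℤ} {n : ℕ} (hW : 0 < W) (hV : 0 ≤ V)
    (hA : A ≤ W) (h : W * prefixSum e n ≤ V * A) (htot : prefixSum e (n + 1) = V) : 0 ≤ e n := by
  rw [prefixSum_succ] at htot
  refine le_of_mul_le_mul_left ?_ hW
  nlinarith [mul_le_mul_of_nonneg_left hA hV]

def IsGoodBlock (d : ℕ) (a b : Fin d → ℕ) (s e : ℕ) : Prop :=
  ChordBound (prefixSum (zeroExt a)) (prefixSum (zeroExt b)) (weight d a) (weight d b) (mu d) s e ∧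
    (e = d ∨ e < d ∧ (mu d : ℤ) * zeroExt a 0 ≤ zeroExt b (e - 1) - zeroExt b e)

lemma exists_partition_add_vSeq {d : ℕ} {a b : Fin d → ℕ} {L : List ℕ} (hL : L.sum = d)
    (ha : IsPartition d a) (hb : IsPartition d b) (hdom : ExtDom d b a) (hW : 0 < weight d a)
    (hV : (mu d : ℤ) * weight d a ≤ weight d b) (hchain : IsBlockChain (IsGoodBlock d a b) 0 L) :
    ∃ b' : Fin d → ℕ, IsPartition d b' ∧ ExtDom d b' a ∧ b = b' + vSeq d L (mu d • a) := by
  set c := vSeq d L (mu d • a)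
  have hc := isBlockAverage_vSeq hL a
  have hgood : ∀ j < d, IsGoodBlock d a b (blockOf L j).1 ((blockOf L j).1 + (blockOf L j).2) :=
    fun j hj => by simpa using hchain.rel_blockOf (i := j) (by omega)
  have hex := hc.mul_sub_prefixSum_le hL (fun j hj => (hgood j hj).1) (extDom_iff.1 hdom)
  set e := zeroExt b - zeroExt c
  have hpe : ∀ k, prefixSum e k = prefixSum (zeroExt b) k - prefixSum (zeroExt c) k :=
    fun k => sum_sub_distrib _ _
  have hwe : prefixSum e d = weight d b - mu d * weight d a := by
    rw [hpe, hc.prefixSum_eq hL, weight_eq_prefixSum, weight_eq_prefixSum]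
  have hlast : 0 ≤ e (d - 1) := by
    obtain ⟨n, rfl⟩ : ∃ n, d = n + 1 := Nat.exists_eq_add_one.2 <|
      Nat.pos_of_ne_zero (by rintro rfl; simp [weight] at hW)
    refine nonneg_of_mul_prefixSum_le (W := weight (n + 1) a) (by exact_mod_cast hW)
      (sub_nonneg.2 hV) ?_ (by rw [hpe]; exact hex n n.le_succ) hwe
    rw [weight_eq_prefixSum, prefixSum_succ]
    linarith [zeroExt_nonneg a n]
  have he : Antitone e := antitone_nat_of_succ_le fun j => by
    rcases lt_trichotomy (j + 1) d with h | h | h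
    · exact hc.sub_succ_le hL (isPartition_iff_antitone_zeroExt.1 ha)
        (isPartition_iff_antitone_zeroExt.1 hb) (by positivity) (zeroExt_nonneg c)
        (fun j hj => (hgood j hj).2.imp_right And.right) h
    · simpa [e, ← h, zeroExt_of_le] using hlast
    · simp [e, zeroExt_of_le _ h.le, zeroExt_of_le _ (show d ≤ j by omega)]
  have hcb : c ≤ b := fun i => by
    simpa [e, zeroExt_of_le, sub_nonneg] using he i.2.le
  have hext : zeroExt (b - c) = e := funext fun i => by
    simp only [e, Pi.sub_apply, zeroExt]
    split_ifs <;> simp [hcb _]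
  refine ⟨b - c, isPartition_iff_antitone_zeroExt.2 (hext ▸ he), extDom_iff.2 fun k hk => ?_,
    (tsub_add_cancel_of_le hcb).symm⟩
  rw [weight_eq_prefixSum (b - c), hext, hwe, hpe]
  exact hex k hk

lemma mu_pos (d : ℕ) : 0 < mu d :=
  Nat.pos_of_ne_zero <| Finset.lcm_ne_zero_iff.2 fun x hx => by
    simp only [mem_Icc] at hx; simp; omega

lemma exists_isBlockChain_isGoodBlock {d : ℕ} {a b : Fin d → ℕ} (hd : 0 < d)
    (hb : IsPartition d b) (hdom : ExtDom d b a) (hW : 0 < weight d a)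
    (hV : (weight d a : ℤ) * (d ^ 3 * (mu d * a ⟨0, hd⟩)) ≤ weight d b - mu d * weight d a) :
    ∃ L : List ℕ, L.sum = d ∧ IsBlockChain (IsGoodBlock d a b) 0 L := by
  set Q : ℕ → Prop := fun e =>
    e = d ∨ e < d ∧ (mu d : ℤ) * zeroExt a 0 ≤ zeroExt b (e - 1) - zeroExt b e
  have hsplit : ∀ p q, p < q → Q q → ¬ ChordBound (prefixSum (zeroExt a)) (prefixSum (zeroExt b))
      (weight d a) (weight d b) (mu d) p q → ∃ j, p < j ∧ j < q ∧ Q j := by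
    intro p q hpq hq hP
    have hqd : q ≤ d := by rcases hq with rfl | hq; exacts [le_rfl, hq.1.le]
    obtain ⟨k, hpk, hkq, hviol⟩ := by simpa [ChordBound] using hP
    obtain ⟨j, hpj, hjq, hj⟩ := exists_drop_of_chord_violation
      (isPartition_iff_antitone_zeroExt.1 hb) (by exact_mod_cast hW) (by exact_mod_cast mu_pos d)
      (zeroExt_nonneg a 0) (extDom_iff.1 hdom) (by simpa [zeroExt, hd] using hV) hpk hkq hqd hviol
    exact ⟨j, hpj, hjq, Or.inr ⟨by omega, hj.le⟩⟩
  obtain ⟨L, hL, h⟩ := exists_isBlockChain hsplit hd (Or.inl rfl)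
  exact ⟨L, by simpa using hL, h⟩

/-- there is a bound `N` (depending only on `a`) such that every nonzero
partition `b ⪯ a` of weight `> N` can be written as `b = b' + v(L, μa)` for some composition
`L` of `d` and some partition `b'` which is zero or satisfies `b' ⪯ a`. -/
theorem exists_bound_split (d : ℕ) (hd : 1 ≤ d) (a : Fin d → ℕ)
    (ha : IsPartition d a) (ha0 : a ≠ 0) :
    ∃ N : ℕ, ∀ b : Fin d → ℕ, IsPartition d b → b ≠ 0 → ExtDom d b a →
      N < weight d b →
        ∃ L : List ℕ, IsComposition d L ∧
          ∃ b' : Fin d → ℕ, IsPartition d b' ∧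
            (b' = 0 ∨ ExtDom d b' a) ∧
            b = b' + vSeq d L (mu d • a) := by
  refine ⟨mu d * weight d a * (1 + d ^ 3 * weight d a), fun b hb _ hdom hN => ?_⟩
  have hW : 0 < weight d a := Nat.pos_of_ne_zero fun h =>
    ha0 (funext fun i => sum_eq_zero_iff.1 h i (mem_univ i))
  have ha₀ : (a ⟨0, hd⟩ : ℤ) ≤ weight d a := by
    exact_mod_cast single_le_sum (fun i _ => Nat.zero_le (a i)) (mem_univ _)
  have hN' : ((mu d * weight d a * (1 + d ^ 3 * weight d a) : ℕ) : ℤ) < weight d b := by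
    exact_mod_cast hN
  push_cast at hN'
  have hμW : (0 : ℤ) ≤ weight d a * (d ^ 3 * mu d) := by positivity
  have hV : (weight d a : ℤ) * (d ^ 3 * (mu d * a ⟨0, hd⟩)) ≤ weight d b - mu d * weight d a := by
    nlinarith [mul_le_mul_of_nonneg_left ha₀ hμW]
  obtain ⟨L, hL, hchain⟩ := exists_isBlockChain_isGoodBlock hd hb hdom hW hV
  obtain ⟨b', hb', hdom', hsplit⟩ :=
    exists_partition_add_vSeq hL ha hb hdom hW (by nlinarith) hchain
  exact ⟨L, ⟨hchain.pos, hL⟩, b', hb', Or.inr hdom', hsplit⟩
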